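/- arXiv:2105.08400 — 6 statements merged into one kernel-verified Lean document; each statement's English description precedes it below -/
import Mathlib

section
/- Suppose φ : ℂ[z] → ℂ[z] is the algebra endomorphism of substitution by a polynomial φ(z), and J is the coefficient-conjugation involution. If the composition of the substitution by Jφ with the substitution by φ is the identity map on ℂ[z], then φ(z) = a z + b with |a| = 1 and a·conj(b) + b = 0. -/
open Polynomial

/-! Degrees multiply under composition, so `φ(Jφ(z)) = z` forces `φ = a z + b`.
Composing `a z + b` with `conj a z + conj b` gives `|a|² z + (a conj b + b)`, and comparing
coefficients with `z` gives both conditions. -/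

namespace Polynomial

theorem natDegree_eq_one_of_comp_eq_X {R : Type*} [Semiring R] [NoZeroDivisors R] [Nontrivial R]
    {p q : R[X]} (h : p.comp q = X) : p.natDegree = 1 :=
  Nat.eq_one_of_mul_eq_one_right (by rw [← natDegree_comp, h, natDegree_X])

theorem C_mul_X_add_C_comp_C_mul_X_add_C {R : Type*} [CommSemiring R] (a b c d : R) :
    (C a * X + C b).comp (C c * X + C d) = C (a * c) * X + C (a * d + b) := by
  simp only [add_comp, mul_comp, C_comp, X_comp, C_mul, C_add]
  ring

theorem C_mul_X_add_C_eq_X_iff {R : Type*} [Semiring R] [Nontrivial R] {a b : R} :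
    C a * X + C b = X ↔ a = 1 ∧ b = 0 := by
  refine ⟨fun h => ⟨?_, ?_⟩, fun ⟨ha, hb⟩ => by simp [ha, hb]⟩
  · simpa using congrArg (coeff · 1) h
  · simpa using congrArg (coeff · 0) h

end Polynomial

theorem RCLike.norm_eq_one_of_mul_conj_eq_one {K : Type*} [RCLike K] {z : K}
    (h : z * starRingEnd K z = 1) : ‖z‖ = 1 := by
  rw [RCLike.mul_conj] at h
  exact (pow_eq_one_iff_of_nonneg (norm_nonneg z) two_ne_zero).mp (by exact_mod_cast h)

/-- If the composition of substitution by `Jφ` (coefficientwise conjugation of `φ`)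
with substitution by `φ` is the identity on `ℂ[z]`, then `φ = a z + b` with `|a| = 1` and
`a * conj b + b = 0`. -/
theorem subst_conj_comp_subst_id
    (φ : Polynomial ℂ)
    (h : ∀ p : Polynomial ℂ, (p.comp φ).comp (φ.map (starRingEnd ℂ)) = p) :
    ∃ a b : ℂ, φ = Polynomial.C a * Polynomial.X + Polynomial.C b ∧
      ‖a‖ = 1 ∧ a * (starRingEnd ℂ) b + b = 0 := by
  have hX : φ.comp (φ.map (starRingEnd ℂ)) = X := by simpa using h X
  have hφ := eq_X_add_C_of_natDegree_le_one (natDegree_eq_one_of_comp_eq_X hX).le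
  set a := φ.coeff 1
  set b := φ.coeff 0
  rw [hφ, Polynomial.map_add, Polynomial.map_mul, map_C, map_C, map_X,
    C_mul_X_add_C_comp_C_mul_X_add_C, C_mul_X_add_C_eq_X_iff] at hX
  exact ⟨a, b, hφ, RCLike.norm_eq_one_of_mul_conj_eq_one hX.1, hX.2⟩
end

section
/- In the setting of the previous statement, ker(conj(w) − Z*) = ℂ·[w] for every w ∈ ℂ; that is, every complex number conj(w) is an eigenvalue of Z* with one-dimensional eigenspace spanned by the point wave function [w]. Consequently Z and Z* are unbounded operators. -/
/-!
Testing `Z† φ = conj w • φ` against `x ∈ dom Z` says exactly that `φ ⊥ (Z - w) x` for all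
`x`. The reproducing property gives this for `φ = K w`. Conversely, every polynomial `q`
splits as `q = (z - w) p + q(w)`, so `φ` pairs with `q` as `q(w)` times its pairing with the
constant `1`, i.e. as a multiple of `K w` does; density of the polynomials forces `φ ∈ ℂ • K w`.
Eigenvalues of unbounded modulus make `Z†` unbounded, and `Z` is then unbounded too, since the
adjoint of a bounded densely defined operator is bounded.
-/

open scoped InnerProductSpace ComplexConjugate

namespace LinearPMap

variable {𝕜 E F : Type*} [RCLike 𝕜] [NormedAddCommGroup E] [InnerProductSpace 𝕜 E]
  [NormedAddCommGroup F] [InnerProductSpace 𝕜 F]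

theorem norm_adjoint_apply_le [CompleteSpace E] {T : E →ₗ.[𝕜] F}
    (hT : Dense (T.domain : Set E)) {C : ℝ} (hC : 0 ≤ C)
    (hbound : ∀ x : T.domain, ‖T x‖ ≤ C * ‖(x : E)‖) (y : T†.domain) :
    ‖T† y‖ ≤ C * ‖(y : F)‖ := by
  have hpair : ∀ x : E, ‖⟪T† y, x⟫_𝕜‖ ≤ C * ‖(y : F)‖ * ‖x‖ := by
    refine hT.induction (fun x hx => ?_) (isClosed_le (by fun_prop) (by fun_prop))
    calc ‖⟪T† y, x⟫_𝕜‖ = ‖⟪(y : F), T ⟨x, hx⟩⟫_𝕜‖ := by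
          rw [← adjoint_isFormalAdjoint hT y ⟨x, hx⟩]
      _ ≤ ‖(y : F)‖ * (C * ‖x‖) := by
          grw [norm_inner_le_norm, hbound]
      _ = C * ‖(y : F)‖ * ‖x‖ := by ring
  have hsq : ‖T† y‖ * ‖T† y‖ ≤ C * ‖(y : F)‖ * ‖T† y‖ := by
    simpa only [inner_self_eq_norm_sq_to_K, norm_pow, norm_mul, RCLike.norm_ofReal, abs_norm, sq] using
      hpair (T† y)
  rcases (norm_nonneg (T† y)).eq_or_lt with h | h
  · rw [← h]
    positivity
  · exact le_of_mul_le_mul_right hsq h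

section Eigen

variable [CompleteSpace E] {T : E →ₗ.[𝕜] E} {w : 𝕜}

theorem mem_adjoint_domain_of_inner_apply_eq_mul {y : E}
    (h : ∀ x : T.domain, ⟪y, T x⟫_𝕜 = w * ⟪y, (x : E)⟫_𝕜) : y ∈ T†.domain :=
  mem_adjoint_domain_of_exists y ⟨conj w • y, fun x => by rw [inner_smul_left, RCLike.conj_conj, h]⟩

theorem adjoint_apply_eq_conj_smul_iff (hT : Dense (T.domain : Set E)) (y : T†.domain) :
    T† y = conj w • (y : E) ↔ ∀ x : T.domain, ⟪(y : E), T x⟫_𝕜 = w * ⟪(y : E), (x : E)⟫_𝕜 := by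
  constructor
  · intro h x
    rw [← adjoint_isFormalAdjoint hT y x, h, inner_smul_left, RCLike.conj_conj]
  · intro h
    exact adjoint_apply_eq hT y fun x => by rw [inner_smul_left, RCLike.conj_conj, h]

end Eigen

theorem not_exists_norm_apply_le_of_eigenvalues_unbounded {T : E →ₗ.[𝕜] E}
    (h : ∀ r : ℝ, ∃ μ : 𝕜, r < ‖μ‖ ∧ ∃ x : T.domain, (x : E) ≠ 0 ∧ T x = μ • (x : E)) :
    ¬ ∃ C : ℝ, ∀ x : T.domain, ‖T x‖ ≤ C * ‖(x : E)‖ := by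
  rintro ⟨C, hC⟩
  obtain ⟨μ, hμ, x, hx, hTx⟩ := h C
  have hle := hC x
  rw [hTx, norm_smul] at hle
  exact hμ.not_ge (le_of_mul_le_mul_right hle (norm_pos_iff.2 hx))

end LinearPMap

section ReproducingKernel

variable {H : Type*} [NormedAddCommGroup H] [InnerProductSpace ℂ H]
  {incl : H →ₗ[ℂ] (ℂ → ℂ)} {K : ℂ → H} {Z : H →ₗ.[ℂ] H}

theorem inner_kernel_apply_eq_mul (hK : ∀ (w : ℂ) (ψ : H), ⟪K w, ψ⟫_ℂ = incl ψ w)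
    (hZ : ∀ ψ : Z.domain, incl (Z ψ) = fun z => z * incl (ψ : H) z) (w : ℂ) (x : Z.domain) :
    ⟪K w, Z x⟫_ℂ = w * ⟪K w, (x : H)⟫_ℂ := by
  rw [hK, hK, hZ]

theorem exists_eq_apply_sub_smul_add_eval_smul (hinj : Function.Injective incl)
    (hpoly : ∀ p : Polynomial ℂ, ∃ ψ : H, incl ψ = fun z => p.eval z)
    (hZdom : ∀ ψ : H, ψ ∈ Z.domain ↔ ∃ χ : H, incl χ = fun z => z * incl ψ z)
    (hZ : ∀ ψ : Z.domain, incl (Z ψ) = fun z => z * incl (ψ : H) z)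
    {e φ : H} (he : incl e = 1) {q : Polynomial ℂ} (hq : incl φ = fun z => q.eval z) (w : ℂ) :
    ∃ x : Z.domain, φ = Z x - w • (x : H) + q.eval w • e := by
  obtain ⟨p, hp⟩ := Polynomial.X_sub_C_dvd_sub_C_eval (a := w) (p := q)
  obtain ⟨φp, hφp⟩ := hpoly p
  obtain ⟨χ, hχ⟩ := hpoly (Polynomial.X * p)
  have hφp_mem : φp ∈ Z.domain := (hZdom φp).2 ⟨χ, by rw [hχ, hφp]; simp⟩
  refine ⟨⟨φp, hφp_mem⟩, hinj ?_⟩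
  rw [map_add, map_sub, map_smul, map_smul, hZ, hq, he]
  funext z
  have hz := congrArg (Polynomial.eval z) hp
  simp only [Polynomial.eval_sub, Polynomial.eval_mul, Polynomial.eval_X,
    Polynomial.eval_C] at hz
  simp only [Pi.add_apply, Pi.sub_apply, Pi.smul_apply, Pi.one_apply, smul_eq_mul, hφp]
  linear_combination hz

theorem eq_smul_kernel_of_inner_apply_eq_mul (hinj : Function.Injective incl)
    (hpoly : ∀ p : Polynomial ℂ, ∃ ψ : H, incl ψ = fun z => p.eval z)
    (hdensePoly : Dense {ψ : H | ∃ p : Polynomial ℂ, incl ψ = fun z => p.eval z})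
    (hK : ∀ (w : ℂ) (ψ : H), ⟪K w, ψ⟫_ℂ = incl ψ w)
    (hZdom : ∀ ψ : H, ψ ∈ Z.domain ↔ ∃ χ : H, incl χ = fun z => z * incl ψ z)
    (hZ : ∀ ψ : Z.domain, incl (Z ψ) = fun z => z * incl (ψ : H) z) {w : ℂ} {ψ : H}
    (h : ∀ x : Z.domain, ⟪ψ, Z x⟫_ℂ = w * ⟪ψ, (x : H)⟫_ℂ) :
    ∃ c : ℂ, ψ = c • K w := by
  obtain ⟨e, he⟩ := hpoly 1
  replace he : incl e = 1 := he.trans (funext fun _ => Polynomial.eval_one)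
  refine ⟨conj ⟪ψ, e⟫_ℂ, hdensePoly.eq_of_inner_left ℂ ?_⟩
  rintro φ ⟨q, hq⟩
  obtain ⟨x, rfl⟩ := exists_eq_apply_sub_smul_add_eval_smul hinj hpoly hZdom hZ he hq w
  rw [inner_smul_left, RCLike.conj_conj, hK, hq, inner_add_right, inner_sub_right,
    inner_smul_right, inner_smul_right, h]
  ring

end ReproducingKernel

theorem adjoint_eigenspaces_and_unboundedness_general
    (H : Type*) [NormedAddCommGroup H] [InnerProductSpace ℂ H] [CompleteSpace H]
    (incl : H →ₗ[ℂ] (ℂ → ℂ)) (hinj : Function.Injective incl)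
    (hpoly : ∀ p : Polynomial ℂ, ∃ ψ : H, incl ψ = fun z => p.eval z)
    (hdensePoly : Dense {ψ : H | ∃ p : Polynomial ℂ, incl ψ = fun z => p.eval z})
    (K : ℂ → H)
    (hK : ∀ (w : ℂ) (ψ : H), (inner ℂ (K w) ψ : ℂ) = incl ψ w)
    (Z : H →ₗ.[ℂ] H)
    (hZdom : ∀ ψ : H, ψ ∈ Z.domain ↔ ∃ χ : H, incl χ = fun z => z * incl ψ z)
    (hZ : ∀ ψ : Z.domain, incl (Z ψ) = fun z => z * incl (ψ : H) z)
    (hdense : Dense (Z.domain : Set H)) :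
    (∀ w : ℂ,
      (∃ hw : K w ∈ Z.adjoint.domain, K w ≠ 0 ∧
        Z.adjoint ⟨K w, hw⟩ = (starRingEnd ℂ) w • K w) ∧
      (∀ (ψ : H) (hψ : ψ ∈ Z.adjoint.domain),
        Z.adjoint ⟨ψ, hψ⟩ = (starRingEnd ℂ) w • ψ ↔ ∃ c : ℂ, ψ = c • K w)) ∧
    (¬ ∃ C : ℝ, ∀ ψ : Z.domain, ‖Z ψ‖ ≤ C * ‖(ψ : H)‖) ∧
    (¬ ∃ C : ℝ, ∀ φ : Z.adjoint.domain, ‖Z.adjoint φ‖ ≤ C * ‖(φ : H)‖) := by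
  have hKeig := inner_kernel_apply_eq_mul hK hZ
  have hKmem : ∀ w, K w ∈ Z.adjoint.domain := fun w =>
    LinearPMap.mem_adjoint_domain_of_inner_apply_eq_mul (hKeig w)
  have hKapply : ∀ w, Z.adjoint ⟨K w, hKmem w⟩ = conj w • K w := fun w =>
    (LinearPMap.adjoint_apply_eq_conj_smul_iff hdense _).2 (hKeig w)
  have hKne : ∀ w, K w ≠ 0 := fun w hw => by
    obtain ⟨e, he⟩ := hpoly 1
    simpa [hw, he] using hK w e
  have hadjoint_unbounded : ¬ ∃ C : ℝ, ∀ φ : Z.adjoint.domain, ‖Z.adjoint φ‖ ≤ C * ‖(φ : H)‖ :=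
    LinearPMap.not_exists_norm_apply_le_of_eigenvalues_unbounded fun r =>
      ⟨conj ((|r| + 1 : ℝ) : ℂ), by
        rw [RCLike.norm_conj, Complex.norm_real, Real.norm_of_nonneg (by positivity)]
        linarith [le_abs_self r], ⟨K _, hKmem _⟩, hKne _, hKapply _⟩
  refine ⟨fun w => ⟨⟨hKmem w, hKne w, hKapply w⟩, fun ψ hψ => ?_⟩, ?_, hadjoint_unbounded⟩
  · rw [LinearPMap.adjoint_apply_eq_conj_smul_iff hdense]
    refine ⟨eq_smul_kernel_of_inner_apply_eq_mul hinj hpoly hdensePoly hK hZdom hZ, ?_⟩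
    rintro ⟨c, rfl⟩ x
    rw [inner_smul_left, inner_smul_left, hKeig]
    ring
  · rintro ⟨C, hC⟩
    exact hadjoint_unbounded ⟨max C 0, LinearPMap.norm_adjoint_apply_le hdense
      (le_max_right C 0) fun x => (hC x).trans (by gcongr; exact le_max_left C 0)⟩

/-- In the setting of Statement 8, for every `w ∈ ℂ` the kernel of
`conj w - Z†` is the one-dimensional span `ℂ • K w` of the point wave function `K w`
(so every `conj w` is an eigenvalue of `Z†` of multiplicity one), and consequently the
operators `Z` and `Z†` are unbounded. -/
theorem adjoint_eigenspaces_and_unboundedness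
    (H : Type*) [NormedAddCommGroup H] [InnerProductSpace ℂ H] [CompleteSpace H]
    (incl : H →ₗ[ℂ] (ℂ → ℂ)) (hinj : Function.Injective incl)
    (hentire : ∀ ψ : H, Differentiable ℂ (incl ψ))
    (hpoly : ∀ p : Polynomial ℂ, ∃ ψ : H, incl ψ = fun z => p.eval z)
    (hdensePoly : Dense {ψ : H | ∃ p : Polynomial ℂ, incl ψ = fun z => p.eval z})
    (K : ℂ → H)
    (hK : ∀ (w : ℂ) (ψ : H), (inner ℂ (K w) ψ : ℂ) = incl ψ w)
    (Z : H →ₗ.[ℂ] H)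
    (hZdom : ∀ ψ : H, ψ ∈ Z.domain ↔ ∃ χ : H, incl χ = fun z => z * incl ψ z)
    (hZ : ∀ ψ : Z.domain, incl (Z ψ) = fun z => z * incl (ψ : H) z)
    (hdense : Dense (Z.domain : Set H)) :
    (∀ w : ℂ,
      (∃ hw : K w ∈ Z.adjoint.domain, K w ≠ 0 ∧
        Z.adjoint ⟨K w, hw⟩ = (starRingEnd ℂ) w • K w) ∧
      (∀ (ψ : H) (hψ : ψ ∈ Z.adjoint.domain),
        Z.adjoint ⟨ψ, hψ⟩ = (starRingEnd ℂ) w • ψ ↔ ∃ c : ℂ, ψ = c • K w)) ∧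
    (¬ ∃ C : ℝ, ∀ ψ : Z.domain, ‖Z ψ‖ ≤ C * ‖(ψ : H)‖) ∧
    (¬ ∃ C : ℝ, ∀ φ : Z.adjoint.domain, ‖Z.adjoint φ‖ ≤ C * ‖(φ : H)‖) :=
  adjoint_eigenspaces_and_unboundedness_general H incl hinj hpoly hdensePoly K hK Z hZdom hZ hdense
end

section
/- If s_n > 0 satisfies lim s_{n+1}/s_n = +∞, then lim s_n^{1/n} = +∞; and if lim sup s_n s_{n+2}/s_{n+1}^2 < ∞, then the sequence t_n = (s_{n+1}/s_n)^{1/n} is bounded. -/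
/-! Both parts compare the sequence with a geometric one. If `M * u n ≤ u (n + 1)` from some
index on, then `u n ≥ c * M ^ n` with `c > 0`, and `(c * M ^ n) ^ (1 / n) → M` because
`c ^ (1 / n) → 1`; so `u n ^ (1 / n)` is eventually above any `b < M`, and dually for upper bounds.
Part one applies this to `s` with `M` arbitrarily large. Part two applies the upper version to the
ratios `r n = s (n + 1) / s n`, since `s n * s (n + 2) / s (n + 1) ^ 2 = r (n + 1) / r n`. -/

open Filter Topology

lemma tendsto_mul_pow_rpow_inv_natCast {c M : ℝ} (hc : 0 < c) (hM : 0 ≤ M) :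
    Tendsto (fun n : ℕ => (c * M ^ n) ^ (n : ℝ)⁻¹) atTop (𝓝 M) := by
  have hroot : Tendsto (fun n : ℕ => c ^ (n : ℝ)⁻¹) atTop (𝓝 1) := by
    simpa [Function.comp_def] using (Real.continuousAt_const_rpow hc.ne').tendsto.comp
      (tendsto_inv_atTop_zero.comp tendsto_natCast_atTop_atTop)
  refine (one_mul M ▸ hroot.mul_const M).congr' ?_
  filter_upwards [eventually_ne_atTop 0] with n hn
  rw [Real.mul_rpow hc.le (by positivity), Real.pow_rpow_inv_natCast hM hn]

section GeometricComparison

variable {u : ℕ → ℝ}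

lemma exists_pos_mul_pow_le_of_eventually_mul_le_succ (hu : ∀ n, 0 < u n) {M : ℝ} (hM : 0 < M)
    (h : ∀ᶠ n in atTop, M * u n ≤ u (n + 1)) : ∃ c > 0, ∀ᶠ n in atTop, c * M ^ n ≤ u n := by
  obtain ⟨N, hN⟩ := eventually_atTop.1 h
  refine ⟨u N / M ^ N, by have := hu N; positivity, eventually_atTop.2 ⟨N, fun n hn => ?_⟩⟩
  obtain ⟨k, rfl⟩ := Nat.exists_eq_add_of_le hn
  calc u N / M ^ N * M ^ (N + k) = M ^ k * u N := by field_simp; ring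
    _ ≤ u (N + k) := geom_le (u := fun k => u (N + k)) hM.le k fun i _ => hN (N + i) le_self_add

lemma exists_pos_le_mul_pow_of_eventually_succ_le_mul (hu : ∀ n, 0 < u n) {C : ℝ} (hC : 0 < C)
    (h : ∀ᶠ n in atTop, u (n + 1) ≤ C * u n) : ∃ c > 0, ∀ᶠ n in atTop, u n ≤ c * C ^ n := by
  obtain ⟨N, hN⟩ := eventually_atTop.1 h
  refine ⟨u N / C ^ N, by have := hu N; positivity, eventually_atTop.2 ⟨N, fun n hn => ?_⟩⟩
  obtain ⟨k, rfl⟩ := Nat.exists_eq_add_of_le hn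
  calc u (N + k) ≤ C ^ k * u N :=
        le_geom (u := fun k => u (N + k)) hC.le k fun i _ => hN (N + i) le_self_add
    _ = u N / C ^ N * C ^ (N + k) := by field_simp; ring

lemma eventually_lt_rpow_inv_of_eventually_mul_le_succ (hu : ∀ n, 0 < u n) {M b : ℝ}
    (hM : 0 < M) (hb : b < M) (h : ∀ᶠ n in atTop, M * u n ≤ u (n + 1)) :
    ∀ᶠ n in atTop, b < u n ^ (n : ℝ)⁻¹ := by
  obtain ⟨c, hc, hcu⟩ := exists_pos_mul_pow_le_of_eventually_mul_le_succ hu hM h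
  filter_upwards [(tendsto_mul_pow_rpow_inv_natCast hc hM.le).eventually (lt_mem_nhds hb), hcu]
    with n hbn hn
  exact hbn.trans_le (Real.rpow_le_rpow (by positivity) hn (by positivity))

lemma eventually_rpow_inv_lt_of_eventually_succ_le_mul (hu : ∀ n, 0 < u n) {C b : ℝ}
    (hb : C < b) (h : ∀ᶠ n in atTop, u (n + 1) ≤ C * u n) :
    ∀ᶠ n in atTop, u n ^ (n : ℝ)⁻¹ < b := by
  obtain ⟨N, hN⟩ := h.exists
  have hC : 0 < C := pos_of_mul_pos_left ((hu _).trans_le hN) (hu N).le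
  obtain ⟨c, hc, huc⟩ := exists_pos_le_mul_pow_of_eventually_succ_le_mul hu hC h
  filter_upwards [(tendsto_mul_pow_rpow_inv_natCast hc hC.le).eventually (gt_mem_nhds hb), huc]
    with n hbn hn
  exact (Real.rpow_le_rpow (hu n).le hn (by positivity)).trans_lt hbn

end GeometricComparison

/-- For positive `s n`: if `s (n+1) / s n → +∞` then `s n ^ (1/n) → +∞`; and if
`limsup s n * s (n+2) / s (n+1)² < ∞` (i.e. the sequence is eventually bounded above), then the
sequence `t n = (s (n+1) / s n) ^ (1/n)` is bounded. -/
theorem ratio_criteria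
    (s : ℕ → ℝ) (hs : ∀ n, 0 < s n) :
    ((Tendsto (fun n : ℕ => s (n + 1) / s n) atTop atTop) →
      Tendsto (fun n : ℕ => s n ^ ((n : ℝ)⁻¹)) atTop atTop) ∧
    ((∃ C : ℝ, ∀ᶠ n : ℕ in atTop, s n * s (n + 2) / (s (n + 1)) ^ 2 ≤ C) →
      ∃ M : ℝ, ∀ n : ℕ, (s (n + 1) / s n) ^ ((n : ℝ)⁻¹) ≤ M) := by
  constructor
  · intro hlim
    refine tendsto_atTop.2 fun b => ?_
    have hM : 0 < |b| + 1 := by positivity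
    have hstep : ∀ᶠ n in atTop, (|b| + 1) * s n ≤ s (n + 1) :=
      (hlim.eventually_ge_atTop _).mono fun n hn => (le_div_iff₀ (hs n)).1 hn
    exact (eventually_lt_rpow_inv_of_eventually_mul_le_succ hs hM
      (by linarith [le_abs_self b]) hstep).mono fun n hn => hn.le
  · rintro ⟨C, hC⟩
    set r : ℕ → ℝ := fun n => s (n + 1) / s n
    have hr : ∀ n, 0 < r n := fun n => div_pos (hs _) (hs n)
    have hratio : ∀ n, s n * s (n + 2) / s (n + 1) ^ 2 = r (n + 1) / r n := fun n => by
      have := hs n; have := hs (n + 1)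
      simp only [r]
      field_simp
    have hstep : ∀ᶠ n in atTop, r (n + 1) ≤ C * r n :=
      hC.mono fun n hn => (div_le_iff₀ (hr n)).1 (hratio n ▸ hn)
    have hbdd : IsBoundedUnder (· ≤ ·) atTop fun n => r n ^ (n : ℝ)⁻¹ :=
      ⟨C + 1, (eventually_rpow_inv_lt_of_eventually_succ_le_mul hr (lt_add_one C) hstep).mono
        fun n hn => hn.le⟩
    obtain ⟨M, hM⟩ := hbdd.bddAbove_range
    exact ⟨M, fun n => hM ⟨n, rfl⟩⟩
end

section
/- The sesquilinear form ⟨z̄^i z^j, z̄^n z^m⟩ = s_{i+m}·δ_{i−j,n−m} on ℂ[z,z̄] is positive semidefinite if and only if both families of Hankel matrices (s_{i+j})_{0≤i,j≤n} and (s_{i+j+1})_{0≤i,j≤n} are positive semidefinite for all n (the Stieltjes moment condition). -/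
/-!
In the monomial basis the form has the real Gram matrix
`K(z̄^i z^j, z̄^n z^m) = [i - j = n - m] s_{i+m}`, and since `K` is real, positivity of the form is
positivity of `K` (the real and imaginary parts of the coefficients contribute separately).
On the monomials `z̄^{k+e} z^k`, `K` is the Hankel matrix `(s_{k+l+e})`, which gives necessity.
Conversely, on the monomials with `i - j = d` fixed, `K` is the Hankel matrix
`(s_{a+b+e})` in `a = ⌊(i+j)/2⌋`, where `e ≡ d mod 2`. Hence `K` is a sum of Schur products of a
positive block mask with pulled-back Hankel matrices, and the Schur product theorem concludes.
-/

open MvPolynomial Matrix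

theorem Matrix.posSemidef_iff_forall_fin_submatrix {R : Type*} [Ring R] [PartialOrder R]
    [StarRing R] {M : Matrix ℕ ℕ R} :
    M.PosSemidef ↔ ∀ n, (M.submatrix (Fin.val : Fin (n + 1) → ℕ) Fin.val).PosSemidef := by
  refine ⟨fun hM n => hM.submatrix _, fun h => ⟨?_, fun x => ?_⟩⟩
  · ext i j
    exact (h (i + j)).isHermitian.apply (⟨i, by omega⟩ : Fin (i + j + 1)) ⟨j, by omega⟩
  · set n := x.support.sup id
    have hx : x.support ⊆ Finset.range (n + 1) := fun i hi =>
      Finset.mem_range_succ_iff.mpr (Finset.le_sup (f := id) hi)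
    have := (h n).dotProduct_mulVec_nonneg (fun i => x i)
    simp only [dotProduct, mulVec, submatrix_apply, Pi.star_apply, Finset.mul_sum] at this
    rw [Finsupp.sum_of_support_subset x hx _ (by simp), Finset.sum_range]
    refine this.trans_eq (Finset.sum_congr rfl fun i _ => ?_)
    rw [Finsupp.sum_of_support_subset x hx _ (by simp), Finset.sum_range]
    simp only [mul_assoc]

theorem re_sum_sum_conj_mul_ofReal {ι : Type*} (G : Matrix ι ι ℝ) (c : ι →₀ ℂ) :
    (c.sum fun i a => c.sum fun j b => star a * G i j * b).re =
      ((c.mapRange Complex.re Complex.zero_re).sum fun i a =>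
          (c.mapRange Complex.re Complex.zero_re).sum fun j b => star a * G i j * b) +
        ((c.mapRange Complex.im Complex.zero_im).sum fun i a =>
          (c.mapRange Complex.im Complex.zero_im).sum fun j b => star a * G i j * b) := by
  simp only [Finsupp.sum_mapRange_index, star_trivial, zero_mul, mul_zero, Finsupp.sum_fun_zero,
    implies_true]
  simp only [Finsupp.sum, Complex.re_sum, ← Finset.sum_add_distrib]
  simp [Complex.mul_re, Complex.mul_im]

theorem Module.Basis.re_apply_self_nonneg_iff_posSemidef {ι M : Type*} [AddCommGroup M]
    [Module ℂ M] (b : Module.Basis ι ℂ M) (B : M →ₗ⋆[ℂ] M →ₗ[ℂ] ℂ) (G : Matrix ι ι ℝ)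
    (hG : G.IsHermitian) (hB : ∀ i j, B (b i) (b j) = G i j) :
    (∀ x, 0 ≤ (B x x).re) ↔ G.PosSemidef := by
  have expand (x : M) :
      B x x = (b.repr x).sum fun i a => (b.repr x).sum fun j c => star a * G i j * c := by
    rw [← LinearMap.sum_repr_mul_repr_mulₛₗ b b (B := B) x x]
    simp only [hB, smul_eq_mul, RingHom.id_apply, Complex.star_def]
    exact Finsupp.sum_congr fun i _ => Finsupp.sum_congr fun j _ => by ring
  refine ⟨fun h => ⟨hG, fun y => ?_⟩, fun h x => ?_⟩
  · have := h (b.repr.symm (y.mapRange Complex.ofReal Complex.ofReal_zero))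
    simp only [expand, LinearEquiv.apply_symm_apply, Finsupp.sum_mapRange_index, star_zero,
      zero_mul, mul_zero, Finsupp.sum_fun_zero, implies_true] at this
    simpa [Finsupp.sum, Complex.re_sum, ← Complex.ofReal_mul] using this
  · rw [expand, re_sum_sum_conj_mul_ofReal]
    exact add_nonneg (h.2 _) (h.2 _)

def hankel {R : Type*} (s : ℕ → R) (e : ℕ) : Matrix ℕ ℕ R := of fun i j => s (i + j + e)

/-- The Gram matrix of the form in the monomial basis; `u` indexes `z̄ ^ u 1 * z ^ u 0`. -/
def stieltjesKernel (s : ℕ → ℝ) : Matrix (Fin 2 →₀ ℕ) (Fin 2 →₀ ℕ) ℝ :=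
  of fun u v => if (u 1 : ℤ) - u 0 = (v 1 : ℤ) - v 0 then s (u 1 + v 0) else 0

theorem stieltjesKernel_isHermitian (s : ℕ → ℝ) : (stieltjesKernel s).IsHermitian := by
  ext u v
  simp only [conjTranspose_apply, stieltjesKernel, of_apply, star_trivial]
  by_cases h : (u 1 : ℤ) - u 0 = (v 1 : ℤ) - v 0
  · rw [if_pos h.symm, if_pos h]; congr 1; omega
  · rw [if_neg (Ne.symm h), if_neg h]

theorem hankel_eq_submatrix_stieltjesKernel (s : ℕ → ℝ) (e : ℕ) :
    hankel s e = (stieltjesKernel s).submatrix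
      (fun k => Finsupp.single 0 k + Finsupp.single 1 (k + e))
      (fun k => Finsupp.single 0 k + Finsupp.single 1 (k + e)) := by
  ext k l
  simp [hankel, stieltjesKernel, add_right_comm]

theorem stieltjesKernel_eq_sum (s : ℕ → ℝ) :
    stieltjesKernel s = ∑ e ∈ Finset.range 2,
      (diagonal fun d : ℤ => if d % 2 = e then (1 : ℝ) else 0).submatrix
        (fun u : Fin 2 →₀ ℕ => (u 1 : ℤ) - u 0) (fun u => (u 1 : ℤ) - u 0) ⊙
      (hankel s e).submatrix (fun u : Fin 2 →₀ ℕ => (u 0 + u 1) / 2) (fun u => (u 0 + u 1) / 2) := by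
  ext u v
  simp only [hankel, stieltjesKernel, Finset.sum_range_succ, Finset.sum_range_zero, zero_add,
    Matrix.add_apply, hadamard_apply, submatrix_apply, diagonal_apply, of_apply]
  by_cases h : (u 1 : ℤ) - u 0 = (v 1 : ℤ) - v 0
  · simp only [if_pos h]
    rcases Int.emod_two_eq_zero_or_one ((u 1 : ℤ) - u 0) with hp | hp
    · rw [if_pos (by exact_mod_cast hp), if_neg (by rw [hp]; decide)]
      simp only [one_mul, zero_mul, add_zero]
      congr 1
      omega
    · rw [if_neg (by rw [hp]; decide), if_pos (by exact_mod_cast hp)]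
      simp only [one_mul, zero_mul, zero_add]
      congr 1
      omega
  · simp [h]

theorem stieltjesKernel_posSemidef_iff (s : ℕ → ℝ) :
    (stieltjesKernel s).PosSemidef ↔ (hankel s 0).PosSemidef ∧ (hankel s 1).PosSemidef := by
  refine ⟨fun h => ⟨?_, ?_⟩, fun ⟨h₀, h₁⟩ => ?_⟩
  · rw [hankel_eq_submatrix_stieltjesKernel]; exact h.submatrix _
  · rw [hankel_eq_submatrix_stieltjesKernel]; exact h.submatrix _
  rw [stieltjesKernel_eq_sum]
  refine posSemidef_sum _ fun e he => PosSemidef.hadamard ?_ ?_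
  · exact (PosSemidef.diagonal fun d => by positivity).submatrix _
  · obtain rfl | rfl : e = 0 ∨ e = 1 := by simp at he; omega
    exacts [h₀.submatrix _, h₁.submatrix _]

theorem monomial_one_eq_X_one_pow_mul_X_zero_pow {R : Type*} [CommSemiring R]
    (u : Fin 2 →₀ ℕ) : monomial u (1 : R) = X 1 ^ u 1 * X 0 ^ u 0 := by
  rw [monomial_eq, C_1, one_mul, Finsupp.prod_pow, Fin.prod_univ_two, mul_comm]

theorem positivity_iff_stieltjes_general
    (s : ℕ → ℝ)
    (B : MvPolynomial (Fin 2) ℂ → MvPolynomial (Fin 2) ℂ → ℂ)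
    (hadd₁ : ∀ p q r, B (p + q) r = B p r + B q r)
    (hadd₂ : ∀ p q r, B p (q + r) = B p q + B p r)
    (hsmul₁ : ∀ (c : ℂ) p q, B (c • p) q = (starRingEnd ℂ) c * B p q)
    (hsmul₂ : ∀ (c : ℂ) p q, B p (c • q) = c * B p q)
    (hbasis : ∀ i j n m : ℕ,
      B (X 1 ^ i * X 0 ^ j) (X 1 ^ n * X 0 ^ m) =
        if (i : ℤ) - (j : ℤ) = (n : ℤ) - (m : ℤ) then (s (i + m) : ℂ) else 0) :
    (∀ f : MvPolynomial (Fin 2) ℂ, 0 ≤ (B f f).re) ↔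
      ((∀ n : ℕ, (Matrix.of fun i j : Fin (n + 1) => s ((i : ℕ) + (j : ℕ))).PosSemidef) ∧
       (∀ n : ℕ, (Matrix.of fun i j : Fin (n + 1) => s ((i : ℕ) + (j : ℕ) + 1)).PosSemidef)) := by
  let Bₗ := LinearMap.mk₂'ₛₗ (starRingEnd ℂ) (RingHom.id ℂ) B hadd₁ hsmul₁ hadd₂ hsmul₂
  have gram (u v) : Bₗ (basisMonomials (Fin 2) ℂ u) (basisMonomials (Fin 2) ℂ v) =
      stieltjesKernel s u v := by
    simp only [Bₗ, LinearMap.mk₂'ₛₗ_apply, coe_basisMonomials,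
      monomial_one_eq_X_one_pow_mul_X_zero_pow, hbasis, stieltjesKernel, of_apply]
    split_ifs <;> simp
  refine ((basisMonomials (Fin 2) ℂ).re_apply_self_nonneg_iff_posSemidef Bₗ _
    (stieltjesKernel_isHermitian s) gram).trans ?_
  rw [stieltjesKernel_posSemidef_iff, posSemidef_iff_forall_fin_submatrix,
    posSemidef_iff_forall_fin_submatrix]
  rfl

/-- The hermitian sesquilinear form `⟨z̄^i z^j, z̄^n z^m⟩ = s (i+m) δ_{i−j,n−m}`
on `ℂ[z, z̄]` (modelled as `MvPolynomial (Fin 2) ℂ` with `z = X 0`, `z̄ = X 1`) is positive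
semidefinite if and only if all the Hankel matrices `(s (i+j))` and `(s (i+j+1))` are positive
semidefinite (the Stieltjes moment condition). -/
theorem positivity_iff_stieltjes
    (s : ℕ → ℝ) (hs : ∀ n, 0 < s n)
    (B : MvPolynomial (Fin 2) ℂ → MvPolynomial (Fin 2) ℂ → ℂ)
    (hadd₁ : ∀ p q r, B (p + q) r = B p r + B q r)
    (hadd₂ : ∀ p q r, B p (q + r) = B p q + B p r)
    (hsmul₁ : ∀ (c : ℂ) p q, B (c • p) q = (starRingEnd ℂ) c * B p q)
    (hsmul₂ : ∀ (c : ℂ) p q, B p (c • q) = c * B p q)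
    (hherm : ∀ p q, (starRingEnd ℂ) (B p q) = B q p)
    (hbasis : ∀ i j n m : ℕ,
      B (X 1 ^ i * X 0 ^ j) (X 1 ^ n * X 0 ^ m) =
        if (i : ℤ) - (j : ℤ) = (n : ℤ) - (m : ℤ) then (s (i + m) : ℂ) else 0) :
    (∀ f : MvPolynomial (Fin 2) ℂ, 0 ≤ (B f f).re) ↔
      ((∀ n : ℕ, (Matrix.of fun i j : Fin (n + 1) => s ((i : ℕ) + (j : ℕ))).PosSemidef) ∧
       (∀ n : ℕ, (Matrix.of fun i j : Fin (n + 1) => s ((i : ℕ) + (j : ℕ) + 1)).PosSemidef)) :=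
  positivity_iff_stieltjes_general s B hadd₁ hadd₂ hsmul₁ hsmul₂ hbasis
end

section
/- For 0 < q < 1 and all z ∈ ℂ, the second Euler q-identity holds: Σ_{n=0}^∞ (−1)^n q^{n(n−1)/2} z^n / ((q;q)_n) = Π_{k=0}^∞ (1 − q^k z), where (q;q)_n = Π_{k=1}^n (1 − q^k). -/
/-!
Write `aₙ = (-1)ⁿ q^(n(n-1)/2) / (q;q)ₙ` and `G z = ∑ aₙ zⁿ`. The coefficients satisfy
`aₙ₊₁ (1 - qⁿ⁺¹) = -qⁿ aₙ`, which says exactly that `G z = (1 - z) G (q z)`. Iterating,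
`G z = (∏_{k<N} (1 - qᵏ z)) G (qᴺ z)`; as `N → ∞` the partial products converge to the
infinite product and `G (qᴺ z) → G 0 = 1`.
-/

open Finset Filter Topology

variable {𝕜 : Type*} [NormedField 𝕜] {q : 𝕜}

noncomputable def eulerCoeff (q : 𝕜) (n : ℕ) : 𝕜 :=
  (-1) ^ n * q ^ (n * (n - 1) / 2) / ∏ k ∈ range n, (1 - q ^ (k + 1))

lemma one_sub_norm_le_norm_one_sub_pow_succ (hq : ‖q‖ ≤ 1) (k : ℕ) :
    1 - ‖q‖ ≤ ‖1 - q ^ (k + 1)‖ :=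
  calc 1 - ‖q‖ ≤ 1 - ‖q‖ ^ (k + 1) := by
        gcongr; exact pow_le_of_le_one (norm_nonneg q) hq k.succ_ne_zero
    _ = ‖(1 : 𝕜)‖ - ‖q ^ (k + 1)‖ := by rw [norm_one, norm_pow]
    _ ≤ ‖1 - q ^ (k + 1)‖ := norm_sub_norm_le _ _

lemma one_sub_pow_succ_ne_zero (hq : ‖q‖ < 1) (k : ℕ) : 1 - q ^ (k + 1) ≠ 0 :=
  norm_pos_iff.mp <| (sub_pos.mpr hq).trans_le (one_sub_norm_le_norm_one_sub_pow_succ hq.le k)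

lemma eulerCoeff_zero (q : 𝕜) : eulerCoeff q 0 = 1 := by simp [eulerCoeff]

lemma eulerCoeff_succ_mul (hq : ‖q‖ < 1) (n : ℕ) :
    eulerCoeff q (n + 1) * (1 - q ^ (n + 1)) = -q ^ n * eulerCoeff q n := by
  rw [eulerCoeff, eulerCoeff, prod_range_succ, ← div_div,
    div_mul_cancel₀ _ (one_sub_pow_succ_ne_zero hq n), Nat.triangle_succ]
  ring

lemma norm_eulerCoeff_succ_le (hq : ‖q‖ < 1) (n : ℕ) :
    ‖eulerCoeff q (n + 1)‖ ≤ ‖q‖ ^ n / (1 - ‖q‖) * ‖eulerCoeff q n‖ := by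
  have hrec := congrArg norm (eulerCoeff_succ_mul hq n)
  rw [norm_mul, norm_mul, norm_neg, norm_pow] at hrec
  rw [div_mul_eq_mul_div, le_div_iff₀ (sub_pos.mpr hq), ← hrec]
  exact mul_le_mul_of_nonneg_left (one_sub_norm_le_norm_one_sub_pow_succ hq.le n) (norm_nonneg _)

lemma summable_norm_eulerCoeff_mul_pow (hq : ‖q‖ < 1) (z : 𝕜) :
    Summable fun n ↦ ‖eulerCoeff q n * z ^ n‖ := by
  have hratio : Tendsto (fun n ↦ ‖q‖ ^ n / (1 - ‖q‖) * ‖z‖) atTop (𝓝 0) := by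
    simpa using ((tendsto_pow_atTop_nhds_zero_of_lt_one (norm_nonneg q) hq).div_const
      (1 - ‖q‖)).mul_const ‖z‖
  refine summable_of_ratio_norm_eventually_le (r := 1 / 2) (by norm_num) ?_
  filter_upwards [hratio.eventually_le_const (by norm_num : (0 : ℝ) < 1 / 2)] with n hn
  simp only [norm_norm, norm_mul, norm_pow, pow_succ]
  calc ‖eulerCoeff q (n + 1)‖ * (‖z‖ ^ n * ‖z‖)
      ≤ ‖q‖ ^ n / (1 - ‖q‖) * ‖eulerCoeff q n‖ * (‖z‖ ^ n * ‖z‖) := by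
        gcongr; exact norm_eulerCoeff_succ_le hq n
    _ = ‖q‖ ^ n / (1 - ‖q‖) * ‖z‖ * (‖eulerCoeff q n‖ * ‖z‖ ^ n) := by ring
    _ ≤ 1 / 2 * (‖eulerCoeff q n‖ * ‖z‖ ^ n) := by gcongr

noncomputable def eulerSeries (q z : 𝕜) : 𝕜 := ∑' n, eulerCoeff q n * z ^ n

variable [CompleteSpace 𝕜]

lemma eulerSeries_eq_one_sub_mul (hq : ‖q‖ < 1) (z : 𝕜) :
    eulerSeries q z = (1 - z) * eulerSeries q (q * z) := by
  let b (n : ℕ) : 𝕜 := eulerCoeff q n * (q * z) ^ n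
  have hb : HasSum b (eulerSeries q (q * z)) :=
    (summable_norm_eulerCoeff_mul_pow hq (q * z)).of_norm.hasSum
  have hshift := ((hasSum_nat_add_iff' (f := b) 1).mpr hb).sub (hb.mul_left z)
  have hterm (n : ℕ) : b (n + 1) - z * b n = eulerCoeff q (n + 1) * z ^ (n + 1) := by
    linear_combination (-z ^ (n + 1)) * eulerCoeff_succ_mul hq n
  simp only [hterm] at hshift
  rw [eulerSeries,
    ((hasSum_nat_add_iff (f := fun n ↦ eulerCoeff q n * z ^ n) 1).mp hshift).tsum_eq]
  simp only [b, range_one, sum_singleton, eulerCoeff_zero, pow_zero]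
  ring

lemma eulerSeries_eq_prod_mul (hq : ‖q‖ < 1) (z : 𝕜) (N : ℕ) :
    eulerSeries q z = (∏ k ∈ range N, (1 - q ^ k * z)) * eulerSeries q (q ^ N * z) := by
  induction N with
  | zero => simp
  | succ N ih =>
    rw [ih, eulerSeries_eq_one_sub_mul hq (q ^ N * z), prod_range_succ, ← mul_assoc, pow_succ',
      mul_assoc q]

lemma tendsto_eulerSeries_nhds_zero (hq : ‖q‖ < 1) :
    Tendsto (eulerSeries q) (𝓝 0) (𝓝 1) := by
  have hlim : ∑' n, eulerCoeff q n * (0 : 𝕜) ^ n = 1 := by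
    rw [tsum_eq_single 0 fun n hn ↦ by simp [hn], eulerCoeff_zero, pow_zero, mul_one]
  rw [← hlim]
  refine tendsto_tsum_of_dominated_convergence (summable_norm_eulerCoeff_mul_pow hq 1)
    (fun n ↦ ((continuous_pow n).tendsto 0).const_mul _) ?_
  filter_upwards [Metric.closedBall_mem_nhds (0 : 𝕜) one_pos] with w hw n
  rw [mem_closedBall_zero_iff] at hw
  simp only [norm_mul, norm_pow, one_pow, mul_one]
  exact mul_le_of_le_one_right (norm_nonneg _) (pow_le_one₀ (norm_nonneg w) hw)

lemma multipliable_one_sub_pow_mul (hq : ‖q‖ < 1) (z : 𝕜) :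
    Multipliable fun k ↦ 1 - q ^ k * z := by
  simp_rw [sub_eq_add_neg]
  refine multipliable_one_add_of_summable ?_
  simpa [norm_pow] using (summable_geometric_of_lt_one (norm_nonneg q) hq).mul_right ‖z‖

theorem eulerSeries_eq_tprod (hq : ‖q‖ < 1) (z : 𝕜) :
    eulerSeries q z = ∏' k, (1 - q ^ k * z) := by
  have htail : Tendsto (fun N ↦ eulerSeries q (q ^ N * z)) atTop (𝓝 1) :=
    (tendsto_eulerSeries_nhds_zero hq).comp <| by
      simpa using (tendsto_pow_atTop_nhds_zero_of_norm_lt_one hq).mul_const z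
  have hprod := (multipliable_one_sub_pow_mul hq z).tendsto_prod_tprod_nat.mul htail
  rw [mul_one] at hprod
  exact tendsto_nhds_unique (tendsto_const_nhds.congr (eulerSeries_eq_prod_mul hq z)) hprod

/-- The second Euler `q`-identity: for `0 < q < 1` and all `z ∈ ℂ`,
`Σ_{n=0}^∞ (−1)ⁿ q^{n(n−1)/2} zⁿ / (q;q)_n = Π_{k=0}^∞ (1 − qᵏ z)`,
where `(q;q)_n = Π_{k=1}^n (1 − qᵏ)`. -/
theorem euler_second_identity (q : ℝ) (hq0 : 0 < q) (hq1 : q < 1) (z : ℂ) :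
    ∑' n : ℕ, ((-1 : ℂ) ^ n * (q : ℂ) ^ (n * (n - 1) / 2) * z ^ n /
        ∏ k ∈ Finset.range n, (1 - (q : ℂ) ^ (k + 1))) =
      ∏' k : ℕ, (1 - (q : ℂ) ^ k * z) := by
  have hq : ‖(q : ℂ)‖ < 1 := by
    rwa [Complex.norm_real, Real.norm_of_nonneg hq0.le]
  rw [← eulerSeries_eq_tprod hq, eulerSeries]
  congr 1 with n
  rw [eulerCoeff, div_mul_eq_mul_div, mul_right_comm]
end

section
/- In the quadratic algebra ℂ[z,z̄,Q] with exchange array T(n,m;k,l) defined by z^n z̄^m = Σ_{k,l} T(n,m;k,l) z̄^l z^k, conjugation invariance of the relations implies conj(T(n,m;k,l)) = T(m,n;l,k), and the convolution identity T(u+v, m; k, l) = Σ_{s≥0} Σ_{a+b=k} T(u,s;a,l)·T(v,m;b,s) holds. -/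
open Finset

private lemma tri_aux {M : Type*} [AddCommMonoid M] (u v : ℕ) (h : ℕ → ℕ → M)
    (h0 : ∀ a b, (u < a ∨ v < b) → h a b = 0) :
    ∑ a ∈ range (u+1), ∑ b ∈ range (v+1), h a b
      = ∑ k ∈ range (u+v+1), ∑ b ∈ range (k+1), h (k-b) b := by
  have step1 : ∀ k ∈ range (u+v+1), ∑ b ∈ range (k+1), h (k-b) b
      = ∑ b ∈ range (u+v+1), if b ≤ k then h (k-b) b else 0 := by
    intro k hk
    rw [← Finset.sum_filter]
    congr 1
    ext b
    simp only [mem_filter, mem_range, Nat.lt_succ_iff] at *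
    omega
  have step2 : ∀ b ∈ range (u+v+1), (∑ k ∈ range (u+v+1), if b ≤ k then h (k-b) b else 0)
      = ∑ a ∈ range (u+v+1-b), h a b := by
    intro b hb
    rw [← Finset.sum_filter]
    have : (range (u+v+1)).filter (fun k => b ≤ k) = Finset.Ico b (u+v+1) := by
      ext k; simp [mem_filter, Finset.mem_Ico, and_comm]
    rw [this, Finset.sum_Ico_eq_sum_range]
    exact Finset.sum_congr rfl fun a _ => by rw [Nat.add_sub_cancel_left]
  have step3 : ∀ b ∈ range (u+v+1), (∑ a ∈ range (u+v+1-b), h a b)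
      = ∑ a ∈ range (u+1), h a b := by
    intro b hb
    rcases le_or_gt b v with hbv | hbv
    · symm
      apply Finset.sum_subset
      · exact Finset.range_subset_range.2 (by omega)
      · intro a _ ha
        exact h0 a b (Or.inl (by simp only [mem_range] at ha ⊢; omega))
    · rw [Finset.sum_eq_zero fun a _ => h0 a b (Or.inr hbv),
        Finset.sum_eq_zero fun a _ => h0 a b (Or.inr hbv)]
  calc ∑ a ∈ range (u+1), ∑ b ∈ range (v+1), h a b
      = ∑ b ∈ range (v+1), ∑ a ∈ range (u+1), h a b := Finset.sum_comm
    _ = ∑ b ∈ range (u+v+1), ∑ a ∈ range (u+1), h a b := by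
        apply Finset.sum_subset (Finset.range_subset_range.2 (by omega : v+1 ≤ u+v+1))
        intro b _ hb
        exact Finset.sum_eq_zero fun a _ =>
          h0 a b (Or.inr (by simp only [mem_range] at hb; omega))
    _ = ∑ b ∈ range (u+v+1), ∑ a ∈ range (u+v+1-b), h a b :=
        Finset.sum_congr rfl fun b hb => (step3 b hb).symm
    _ = ∑ b ∈ range (u+v+1), ∑ k ∈ range (u+v+1), if b ≤ k then h (k-b) b else 0 :=
        Finset.sum_congr rfl fun b hb => (step2 b hb).symm
    _ = ∑ k ∈ range (u+v+1), ∑ b ∈ range (u+v+1), if b ≤ k then h (k-b) b else 0 :=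
        Finset.sum_comm
    _ = ∑ k ∈ range (u+v+1), ∑ b ∈ range (k+1), h (k-b) b :=
        Finset.sum_congr rfl fun k hk => (step1 k hk).symm

/-- In a *-algebra realization of `ℂ[z, z̄, Q]` (generators `z` and `z̄ = star z`
with a hermitian quadratic exchange relation, the anti-Wick monomials `z̄^l z^k` being linearly
independent), the structure constants `T n m k l` of the expansion
`zⁿ z̄ᵐ = Σ_{k,l} T n m k l • z̄^l z^k` satisfy the conjugation symmetry
`conj (T n m k l) = T m n l k` and the convolution identity
`T (u+v) m k l = Σ_{s} Σ_{a+b=k} T u s a l · T v m b s`. -/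
theorem exchange_array_symmetry_and_convolution
    (A : Type*) [Ring A] [Algebra ℂ A] [StarRing A] [StarModule ℂ A]
    (z : A) (q00 q01 q10 q11 : ℂ)
    (hq : (starRingEnd ℂ) q01 = q10) (hq00 : q00.im = 0) (hq11 : q11.im = 0)
    (hq11' : q11 ≠ -1)
    (hrel : z * star z = star z * z + algebraMap ℂ A q00 + q01 • z + q10 • star z +
      q11 • (star z * z))
    (hLI : LinearIndependent ℂ (fun p : ℕ × ℕ => star z ^ p.1 * z ^ p.2))
    (T : ℕ → ℕ → ℕ → ℕ → ℂ)
    (hsupp : ∀ n m k l : ℕ, T n m k l ≠ 0 → k ≤ n ∧ l ≤ m)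
    (hexp : ∀ n m : ℕ, z ^ n * star z ^ m =
      ∑ k ∈ Finset.range (n + 1), ∑ l ∈ Finset.range (m + 1),
        T n m k l • (star z ^ l * z ^ k)) :
    (∀ n m k l : ℕ, (starRingEnd ℂ) (T n m k l) = T m n l k) ∧
    (∀ u v m k l : ℕ, T (u + v) m k l =
      ∑ s ∈ Finset.range (m + 1), ∑ b ∈ Finset.range (k + 1),
        T u s (k - b) l * T v m b s) := by
  have key : ∀ (S : Finset (ℕ × ℕ)) (c : ℕ × ℕ → ℂ),
      (∑ p ∈ S, c p • (star z ^ p.1 * z ^ p.2)) = 0 → ∀ p ∈ S, c p = 0 :=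
    linearIndependent_iff'.mp hLI
  constructor
  · intro n m k l
    -- zero cases
    by_cases hkl : k ≤ n ∧ l ≤ m
    · -- main case
      set S : Finset (ℕ × ℕ) := range (n+1) ×ˢ range (m+1) with hS
      have hA : z ^ m * star z ^ n = ∑ p ∈ S, (starRingEnd ℂ) (T n m p.1 p.2) •
          (star z ^ p.1 * z ^ p.2) := by
        have := congrArg star (hexp n m)
        rw [star_mul, star_pow, star_pow, star_star, star_sum] at this
        rw [this, Finset.sum_product]
        refine Finset.sum_congr rfl fun a _ => ?_
        rw [star_sum]
        refine Finset.sum_congr rfl fun b _ => ?_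
        rw [star_smul, star_mul, star_pow, star_pow, star_star]
        rfl
      have hB : z ^ m * star z ^ n = ∑ p ∈ S, T m n p.2 p.1 •
          (star z ^ p.1 * z ^ p.2) := by
        rw [hexp m n, Finset.sum_comm, Finset.sum_product]
      have h0 : (∑ p ∈ S, ((starRingEnd ℂ) (T n m p.1 p.2) - T m n p.2 p.1) •
          (star z ^ p.1 * z ^ p.2)) = 0 := by
        simp only [sub_smul, Finset.sum_sub_distrib]
        rw [← hA, ← hB, sub_self]
      have := key S _ h0 (k, l) (by simp [hS, Finset.mem_product, Nat.lt_succ_iff, hkl.1, hkl.2])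
      simpa [sub_eq_zero] using this
    · have h1 : T n m k l = 0 := by
        by_contra h; exact hkl (hsupp n m k l h)
      have h2 : T m n l k = 0 := by
        by_contra h
        obtain ⟨hl, hk⟩ := hsupp m n l k h
        exact hkl ⟨hk, hl⟩
      simp [h1, h2]
  · intro u v m k l
    by_cases hkl : k ≤ u + v ∧ l ≤ m
    · set S : Finset (ℕ × ℕ) := range (m+1) ×ˢ range (u+v+1) with hS
      have hA : z ^ (u+v) * star z ^ m = ∑ p ∈ S, T (u+v) m p.2 p.1 •
          (star z ^ p.1 * z ^ p.2) := by
        rw [hexp (u+v) m, Finset.sum_comm, Finset.sum_product]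
      have hB : z ^ (u+v) * star z ^ m = ∑ p ∈ S,
          (∑ s ∈ range (m+1), ∑ b ∈ range (p.2+1), T v m b s * T u s (p.2-b) p.1) •
          (star z ^ p.1 * z ^ p.2) := by
        calc z ^ (u+v) * star z ^ m
            = ∑ b ∈ range (v+1), ∑ s ∈ range (m+1), ∑ a ∈ range (u+1), ∑ l' ∈ range (s+1),
              (T v m b s * T u s a l') • (star z ^ l' * z ^ (a+b)) := by
              rw [pow_add, mul_assoc, hexp v m, Finset.mul_sum]
              refine Finset.sum_congr rfl fun b _ => ?_
              rw [Finset.mul_sum]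
              refine Finset.sum_congr rfl fun s _ => ?_
              rw [mul_smul_comm, ← mul_assoc, hexp u s, Finset.sum_mul, Finset.smul_sum]
              refine Finset.sum_congr rfl fun a _ => ?_
              rw [Finset.sum_mul, Finset.smul_sum]
              refine Finset.sum_congr rfl fun l' _ => ?_
              rw [smul_mul_assoc, mul_assoc, ← pow_add, smul_smul]
          _ = ∑ b ∈ range (v+1), ∑ s ∈ range (m+1), ∑ a ∈ range (u+1), ∑ l' ∈ range (m+1),
              (T v m b s * T u s a l') • (star z ^ l' * z ^ (a+b)) := by
              refine Finset.sum_congr rfl fun b _ => Finset.sum_congr rfl fun s hs =>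
                Finset.sum_congr rfl fun a _ => ?_
              apply Finset.sum_subset
              · exact Finset.range_subset_range.2 (by simp only [mem_range] at hs; omega)
              · intro l' _ hl'
                have h0 : T u s a l' = 0 := by
                  by_contra h
                  exact hl' (mem_range.2 (Nat.lt_succ_of_le (hsupp u s a l' h).2))
                rw [h0, mul_zero, zero_smul]
          _ = ∑ l' ∈ range (m+1), ∑ s ∈ range (m+1), ∑ a ∈ range (u+1), ∑ b ∈ range (v+1),
              (T v m b s * T u s a l') • (star z ^ l' * z ^ (a+b)) := by
              calc ∑ b ∈ range (v+1), ∑ s ∈ range (m+1), ∑ a ∈ range (u+1), ∑ l' ∈ range (m+1),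
                  (T v m b s * T u s a l') • (star z ^ l' * z ^ (a+b))
                  = ∑ b ∈ range (v+1), ∑ s ∈ range (m+1), ∑ l' ∈ range (m+1), ∑ a ∈ range (u+1),
                    (T v m b s * T u s a l') • (star z ^ l' * z ^ (a+b)) :=
                    Finset.sum_congr rfl fun b _ => Finset.sum_congr rfl fun s _ => Finset.sum_comm
                _ = ∑ b ∈ range (v+1), ∑ l' ∈ range (m+1), ∑ s ∈ range (m+1), ∑ a ∈ range (u+1),
                    (T v m b s * T u s a l') • (star z ^ l' * z ^ (a+b)) :=
                    Finset.sum_congr rfl fun b _ => Finset.sum_comm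
                _ = ∑ l' ∈ range (m+1), ∑ b ∈ range (v+1), ∑ s ∈ range (m+1), ∑ a ∈ range (u+1),
                    (T v m b s * T u s a l') • (star z ^ l' * z ^ (a+b)) := Finset.sum_comm
                _ = ∑ l' ∈ range (m+1), ∑ s ∈ range (m+1), ∑ b ∈ range (v+1), ∑ a ∈ range (u+1),
                    (T v m b s * T u s a l') • (star z ^ l' * z ^ (a+b)) :=
                    Finset.sum_congr rfl fun l' _ => Finset.sum_comm
                _ = ∑ l' ∈ range (m+1), ∑ s ∈ range (m+1), ∑ a ∈ range (u+1), ∑ b ∈ range (v+1),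
                    (T v m b s * T u s a l') • (star z ^ l' * z ^ (a+b)) :=
                    Finset.sum_congr rfl fun l' _ => Finset.sum_congr rfl fun s _ => Finset.sum_comm
          _ = ∑ l' ∈ range (m+1), ∑ s ∈ range (m+1),
              ∑ k' ∈ range (u+v+1), ∑ b ∈ range (k'+1),
              (T v m b s * T u s (k'-b) l') • (star z ^ l' * z ^ k') := by
              refine Finset.sum_congr rfl fun l' _ => Finset.sum_congr rfl fun s _ => ?_
              rw [tri_aux u v (fun a b => (T v m b s * T u s a l') • (star z ^ l' * z ^ (a+b)))]
              · refine Finset.sum_congr rfl fun k' _ => Finset.sum_congr rfl fun b hb => ?_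
                simp only [mem_range, Nat.lt_succ_iff] at hb
                rw [Nat.sub_add_cancel hb]
              · intro a b hab
                have h0 : T v m b s * T u s a l' = 0 := by
                  rcases hab with h | h
                  · have : T u s a l' = 0 := by
                      by_contra hc; exact absurd (hsupp u s a l' hc).1 (by omega)
                    rw [this, mul_zero]
                  · have : T v m b s = 0 := by
                      by_contra hc; exact absurd (hsupp v m b s hc).1 (by omega)
                    rw [this, zero_mul]
                rw [h0, zero_smul]
          _ = ∑ l' ∈ range (m+1), ∑ k' ∈ range (u+v+1),
              (∑ s ∈ range (m+1), ∑ b ∈ range (k'+1), T v m b s * T u s (k'-b) l') •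
              (star z ^ l' * z ^ k') := by
              refine Finset.sum_congr rfl fun l' _ => ?_
              rw [Finset.sum_comm]
              refine Finset.sum_congr rfl fun k' _ => ?_
              rw [Finset.sum_smul]
              refine Finset.sum_congr rfl fun s _ => ?_
              rw [Finset.sum_smul]
          _ = ∑ p ∈ S, (∑ s ∈ range (m+1), ∑ b ∈ range (p.2+1),
              T v m b s * T u s (p.2-b) p.1) • (star z ^ p.1 * z ^ p.2) := by
              rw [hS, Finset.sum_product]
      have h0 : (∑ p ∈ S, ((∑ s ∈ range (m+1), ∑ b ∈ range (p.2+1),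
          T v m b s * T u s (p.2-b) p.1) - T (u+v) m p.2 p.1) •
          (star z ^ p.1 * z ^ p.2)) = 0 := by
        simp only [sub_smul, Finset.sum_sub_distrib]
        rw [← hA, ← hB, sub_self]
      have hco := key S _ h0 (l, k)
        (by simp [hS, Finset.mem_product, Nat.lt_succ_iff, hkl.1, hkl.2])
      rw [sub_eq_zero] at hco
      rw [← hco]
      exact Finset.sum_congr rfl fun s _ => Finset.sum_congr rfl fun b _ => mul_comm _ _
    · have h1 : T (u+v) m k l = 0 := by
        by_contra h; exact hkl (hsupp (u+v) m k l h)
      rw [h1]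
      symm
      apply Finset.sum_eq_zero
      intro s hs
      apply Finset.sum_eq_zero
      intro b hb
      simp only [mem_range, Nat.lt_succ_iff] at hs hb
      rcases not_and_or.mp hkl with h | h
      · rcases eq_or_ne (T u s (k-b) l) 0 with h2 | h2
        · rw [h2, zero_mul]
        rcases eq_or_ne (T v m b s) 0 with h3 | h3
        · rw [h3, mul_zero]
        obtain ⟨ha, _⟩ := hsupp u s (k-b) l h2
        obtain ⟨hb', _⟩ := hsupp v m b s h3
        omega
      · rcases eq_or_ne (T u s (k-b) l) 0 with h2 | h2
        · rw [h2, zero_mul]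
        obtain ⟨_, hl⟩ := hsupp u s (k-b) l h2
        omega
end
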